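/- arXiv:0803.3763 — 3 statements merged into one kernel-verified Lean document; each statement's English description precedes it below -/
import Mathlib

section
/- Fix a part 𝔟 and a centre y₀ ∈ ℝ³. If the external power vanishes on every rotational rigid rate pair, i.e. for every q ∈ ℝ³ one has P^ext_𝔟(q × (y − y₀), Aq) = 0 (invariance of the external power under rotational semi-classical changes in observers, using its linearity in the rates), then the integral balance of moments holds on 𝔟: ∫_𝔟 ((y−y₀) × b + Aᵀβ) dx + ∫_∂𝔟 ((y−y₀) × (Pn) + Aᵀ(Sn)) dH² = 0. -/
open MeasureTheory RealInnerProductSpace Matrix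

noncomputable section

/-- Euclidean 3-space, the ambient space. -/
abbrev E3 := EuclideanSpace ℝ (Fin 3)

/-- `ℝ^m`, the linear space in which the manifold of substructural shapes is embedded. -/
abbrev Ev (m : ℕ) := EuclideanSpace ℝ (Fin m)

/-- Reinterpret a plain function `Fin 3 → ℝ` as an element of Euclidean 3-space. -/
def toE3 (v : Fin 3 → ℝ) : E3 := WithLp.toLp 2 v

/-- Reinterpret a plain function `Fin m → ℝ` as an element of `ℝ^m`. -/
def toEv {m : ℕ} (v : Fin m → ℝ) : Ev m := WithLp.toLp 2 v

/-- The cross product on `ℝ³`. -/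
def cross (u v : E3) : E3 :=
  toE3 ![u 1 * v 2 - u 2 * v 1, u 2 * v 0 - u 0 * v 2, u 0 * v 1 - u 1 * v 0]

/-- A *part* `𝔟` of the body `B`: a bounded open subset, with closure contained in `B`,
whose boundary `∂𝔟 = frontier carrier` is of class C¹ and carries the outward unit normal
field `n`.  The C¹ regularity of the boundary is encoded functionally: the 2-dimensional
Hausdorff measure of the boundary is finite and the Gauss–Green (divergence) theorem holds
on the part. -/
structure BodyPart (B : Set E3) where
  carrier : Set E3
  n : E3 → E3
  isOpen : IsOpen carrier
  isBounded : Bornology.IsBounded carrier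
  closure_subset : closure carrier ⊆ B
  unit_normal : ∀ x ∈ frontier carrier, ‖n x‖ = 1
  finite_boundary : μH[2] (frontier carrier) ≠ ⊤
  gauss_green : ∀ f : E3 → E3, ContDiff ℝ 1 f →
    (∫ x in carrier, ∑ j, fderiv ℝ f x (EuclideanSpace.single j 1) j)
      = ∫ x in frontier carrier, ⟪f x, n x⟫ ∂μH[2]

/-- The external power `P^ext_𝔟(v,w)` of the bulk actions `b, β` and the contact actions
`Pn, Sn` over the part `𝔟`, spent on the rate pair `(v, w)`. -/
def extPower {B : Set E3} {m : ℕ} (b : E3 → E3) (β : E3 → Ev m)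
    (P : E3 → Matrix (Fin 3) (Fin 3) ℝ) (S : E3 → Matrix (Fin m) (Fin 3) ℝ)
    (𝔟 : BodyPart B) (v : E3 → E3) (w : E3 → Ev m) : ℝ :=
  (∫ x in 𝔟.carrier, ((∑ i, b x i * v x i) + ∑ α, β x α * w x α))
  + ∫ x in frontier 𝔟.carrier,
      ((∑ i, (P x).mulVec (𝔟.n x) i * v x i)
        + ∑ α, (S x).mulVec (𝔟.n x) α * w x α) ∂μH[2]

/-- The referential divergence of a `Hom(ℝ³,ℝ³)`-valued field, `(Div P)_i = Σ_j ∂_j P_{ij}`. -/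
def matDiv (P : E3 → Matrix (Fin 3) (Fin 3) ℝ) (x : E3) : E3 :=
  toE3 fun i => ∑ j, fderiv ℝ (fun x' => P x' i j) x (EuclideanSpace.single j 1)

/-- The referential divergence of a `Hom(ℝ³,ℝ^m)`-valued field, `(Div S)_α = Σ_j ∂_j S_{αj}`. -/
def matDivS {m : ℕ} (S : E3 → Matrix (Fin m) (Fin 3) ℝ) (x : E3) : Ev m :=
  toEv fun α => ∑ j, fderiv ℝ (fun x' => S x' α j) x (EuclideanSpace.single j 1)

/-- Ricci's alternating symbol `ε_{ijk}`. -/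
def levi (i j k : Fin 3) : ℝ :=
  if (i, j, k) = (0, 1, 2) ∨ (i, j, k) = (1, 2, 0) ∨ (i, j, k) = (2, 0, 1) then 1
  else if (i, j, k) = (0, 2, 1) ∨ (i, j, k) = (2, 1, 0) ∨ (i, j, k) = (1, 0, 2) then -1
  else 0

/-- `(ε M)_i = Σ_{j,k} ε_{ijk} M_{jk}`. -/
def ric (M : Matrix (Fin 3) (Fin 3) ℝ) : E3 :=
  toE3 fun i => ∑ j, ∑ k, levi i j k * M j k

/-- The spatial gradient of a map `y : ℝ³ → ℝ³` as a matrix field: `F = Dy`,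
`F_{ij} = ∂_j y_i`. -/
def gradMat (y : E3 → E3) (x : E3) : Matrix (Fin 3) (Fin 3) ℝ :=
  Matrix.of fun i j => fderiv ℝ (fun x' => y x' i) x (EuclideanSpace.single j 1)

/-- `((D Aᵀ)·S)(x) = Σ_j (∂_j Aᵀ(x))(S(x) e_j)`, componentwise
`Σ_j Σ_α (∂_j A_{αi}) S_{αj}`. -/
def gradTdotS {m : ℕ} (A S : E3 → Matrix (Fin m) (Fin 3) ℝ) (x : E3) : E3 :=
  toE3 fun i => ∑ j, ∑ α,
    fderiv ℝ (fun x' => A x' α i) x (EuclideanSpace.single j 1) * S x α j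

/-
The external power spent on the rotational rate pair `(q × r, A q)` is the pairing of `q` with
the total moment, because `(r × c)·q = c·(q × r)` and `(Aᵀ w)·q = w·(A q)` pointwise, and
pairing with the constant vector `q` commutes with integration. The hypothesis thus makes the
total moment orthogonal to every `q ∈ ℝ³`, hence zero.
-/

theorem inner_cross (q u c : E3) : ⟪q, cross u c⟫ = ∑ i, c i * cross q u i := by
  simp only [cross, toE3, PiLp.inner_apply, RCLike.inner_apply, Real.ringHom_apply,
    Fin.sum_univ_three, cons_val_zero, cons_val_one, cons_val]
  ring

theorem inner_toE3_transpose_mulVec {m : ℕ} (q : E3) (M : Matrix (Fin m) (Fin 3) ℝ)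
    (w : Fin m → ℝ) : ⟪q, toE3 (Mᵀ *ᵥ w)⟫ = ∑ α, w α * toEv (M *ᵥ q) α :=
  calc ⟪q, toE3 (Mᵀ *ᵥ w)⟫ = (w ᵥ* M) ⬝ᵥ q := by
        simp [PiLp.inner_apply, toE3, dotProduct, mulVec_transpose]
    _ = w ⬝ᵥ (M *ᵥ q) := (dotProduct_mulVec _ _ _).symm

theorem inner_moment_integral_eq_extPower {B : Set E3} {m : ℕ} (b r : E3 → E3) (β : E3 → Ev m)
    (P : E3 → Matrix (Fin 3) (Fin 3) ℝ) (S A : E3 → Matrix (Fin m) (Fin 3) ℝ)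
    (𝔟 : BodyPart B)
    (hbulk : IntegrableOn (fun x => cross (r x) (b x) + toE3 ((A x)ᵀ *ᵥ β x)) 𝔟.carrier)
    (hcontact : IntegrableOn
      (fun x => cross (r x) (toE3 (P x *ᵥ 𝔟.n x)) + toE3 ((A x)ᵀ *ᵥ (S x *ᵥ 𝔟.n x)))
      (frontier 𝔟.carrier) μH[2])
    (q : E3) :
    ⟪q, (∫ x in 𝔟.carrier, cross (r x) (b x) + toE3 ((A x)ᵀ *ᵥ β x))
        + ∫ x in frontier 𝔟.carrier,
            cross (r x) (toE3 (P x *ᵥ 𝔟.n x)) + toE3 ((A x)ᵀ *ᵥ (S x *ᵥ 𝔟.n x)) ∂μH[2]⟫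
      = extPower b β P S 𝔟 (fun x => cross q (r x)) (fun x => toEv (A x *ᵥ q)) := by
  simp only [inner_add_right, ← integral_inner hbulk, ← integral_inner hcontact, extPower,
    inner_cross, inner_toE3_transpose_mulVec]
  rfl

theorem moment_balance_of_rotational_invariance_general
    {m : ℕ} (B : Set E3)
    (b y : E3 → E3) (β : E3 → Ev m)
    (P : E3 → Matrix (Fin 3) (Fin 3) ℝ)
    (S A : E3 → Matrix (Fin m) (Fin 3) ℝ)
    (𝔟 : BodyPart B) (y₀ : E3)
    -- integrability of the integrands
    (hyb : IntegrableOn (fun x => cross (y x - y₀) (b x)) 𝔟.carrier)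
    (hAβ : IntegrableOn (fun x => toE3 ((A x)ᵀ.mulVec (β x))) 𝔟.carrier)
    (hyPn : IntegrableOn (fun x => cross (y x - y₀) (toE3 ((P x).mulVec (𝔟.n x))))
      (frontier 𝔟.carrier) μH[2])
    (hASn : IntegrableOn (fun x => toE3 ((A x)ᵀ.mulVec ((S x).mulVec (𝔟.n x))))
      (frontier 𝔟.carrier) μH[2])
    -- invariance of the external power under rotational semi-classical changes
    -- in observers: it vanishes on every rotational rigid rate pair
    (hrot : ∀ q : E3,
      extPower b β P S 𝔟
        (fun x => cross q (y x - y₀))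
        (fun x => toEv ((A x).mulVec q)) = 0) :
    -- integral balance of moments on 𝔟 about y₀
    (∫ x in 𝔟.carrier,
        (cross (y x - y₀) (b x) + toE3 ((A x)ᵀ.mulVec (β x))))
      + (∫ x in frontier 𝔟.carrier,
          (cross (y x - y₀) (toE3 ((P x).mulVec (𝔟.n x)))
            + toE3 ((A x)ᵀ.mulVec ((S x).mulVec (𝔟.n x)))) ∂μH[2]) = 0 :=
  ext_inner_left ℝ fun q => by
    rw [inner_zero_right, inner_moment_integral_eq_extPower b (fun x => y x - y₀) β P S A 𝔟
      (hyb.add hAβ) (hyPn.add hASn) q, hrot q]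

/-- If the external power vanishes on every rotational rigid rate pair
`(q × (y − y₀), A q)`, then the integral balance of moments holds on the part `𝔟`
about the centre `y₀`. -/
theorem moment_balance_of_rotational_invariance
    {m : ℕ} (B : Set E3) (hB : IsOpen B)
    (b y : E3 → E3) (β : E3 → Ev m)
    (P : E3 → Matrix (Fin 3) (Fin 3) ℝ)
    (S A : E3 → Matrix (Fin m) (Fin 3) ℝ)
    (𝔟 : BodyPart B) (y₀ : E3)
    -- integrability of the integrands
    (hyb : IntegrableOn (fun x => cross (y x - y₀) (b x)) 𝔟.carrier)
    (hAβ : IntegrableOn (fun x => toE3 ((A x)ᵀ.mulVec (β x))) 𝔟.carrier)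
    (hyPn : IntegrableOn (fun x => cross (y x - y₀) (toE3 ((P x).mulVec (𝔟.n x))))
      (frontier 𝔟.carrier) μH[2])
    (hASn : IntegrableOn (fun x => toE3 ((A x)ᵀ.mulVec ((S x).mulVec (𝔟.n x))))
      (frontier 𝔟.carrier) μH[2])
    -- invariance of the external power under rotational semi-classical changes
    -- in observers: it vanishes on every rotational rigid rate pair
    (hrot : ∀ q : E3,
      extPower b β P S 𝔟
        (fun x => cross q (y x - y₀))
        (fun x => toEv ((A x).mulVec q)) = 0) :
    -- integral balance of moments on 𝔟 about y₀
    (∫ x in 𝔟.carrier,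
        (cross (y x - y₀) (b x) + toE3 ((A x)ᵀ.mulVec (β x))))
      + (∫ x in frontier 𝔟.carrier,
          (cross (y x - y₀) (toE3 ((P x).mulVec (𝔟.n x)))
            + toE3 ((A x)ᵀ.mulVec ((S x).mulVec (𝔟.n x)))) ∂μH[2]) = 0 :=
  moment_balance_of_rotational_invariance_general B b y β P S A 𝔟 y₀ hyb hAβ hyPn hASn hrot
end
end

section
/- Theorem 1, part (i) (embedded form): suppose the external power of all actions on any part is invariant under rotational semi-classical changes in observers, i.e. for every part 𝔟 ⊆ B, every rotational velocity q ∈ ℝ³ and every centre y₀ ∈ ℝ³, P^ext_𝔟(q × (y − y₀), Aq) = 0. Then for every part 𝔟 and every y₀ ∈ ℝ³ both integral balances of actions hold: the balance of forces ∫_𝔟 b dx + ∫_∂𝔟 Pn dH² = 0, and the balance of moments ∫_𝔟 ((y−y₀) × b + Aᵀβ) dx + ∫_∂𝔟 ((y−y₀) × (Pn) + Aᵀ(Sn)) dH² = 0. -/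
open MeasureTheory RealInnerProductSpace Matrix

noncomputable section

/-!
A rigid rotational rate pair `(q × (y - y₀), A q)` spends on the actions the power `⟪q, M y₀⟫`,
where `M y₀` is the resultant moment about `y₀`; invariance therefore forces `M y₀ = 0` for every
centre. Moving the centre from `c` to `c'` changes the moment by `(c' - c) × F`, with `F` the
resultant force, so `c × F = 0` for all `c`, i.e. `F = 0`.

Exchanging inner products with the boundary integrals requires the contact actions `P n`, `S n` to
be integrable, hence the normal field to be measurable; this is extracted from Gauss–Green.
-/

lemma cross_eq_toE3_crossProduct (u v : E3) : cross u v = toE3 (u ⨯₃ v) := rfl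

lemma cross_add_left (u v w : E3) : cross (u + v) w = cross u w + cross v w := by
  simp only [cross_eq_toE3_crossProduct, WithLp.ofLp_add, map_add, LinearMap.add_apply]
  rfl

lemma cross_add_right (u v w : E3) : cross u (v + w) = cross u v + cross u w := by
  simp only [cross_eq_toE3_crossProduct, WithLp.ofLp_add, map_add]
  rfl

lemma eq_zero_of_forall_cross_eq_zero {v : E3} (h : ∀ c : E3, cross c v = 0) : v = 0 := by
  have h0 := congrArg (· 1) (h (EuclideanSpace.single 0 1))
  have h1 := congrArg (· 2) (h (EuclideanSpace.single 0 1))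
  have h2 := congrArg (· 2) (h (EuclideanSpace.single 1 1))
  ext i
  fin_cases i <;> simp_all [cross, toE3]

def crossCLM (a : E3) : E3 →L[ℝ] E3 :=
  LinearMap.toContinuousLinearMap
    ((WithLp.linearEquiv 2 ℝ (Fin 3 → ℝ)).symm.toLinearMap ∘ₗ crossProduct (⇑a) ∘ₗ
      (WithLp.linearEquiv 2 ℝ (Fin 3 → ℝ)).toLinearMap)

@[simp]
lemma crossCLM_apply (a v : E3) : crossCLM a v = cross a v := rfl

@[fun_prop]
lemma continuous_toE3 : Continuous toE3 := PiLp.continuous_toLp 2 _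

@[fun_prop]
lemma Continuous.cross {α : Type*} [TopologicalSpace α] {f g : α → E3} (hf : Continuous f)
    (hg : Continuous g) : Continuous fun x => cross (f x) (g x) := by
  unfold _root_.cross
  fun_prop

section MomentDensity

variable {m : ℕ}

def momentDensity (d f : E3) (M : Matrix (Fin m) (Fin 3) ℝ) (w : Fin m → ℝ) : E3 :=
  cross d f + toE3 (Mᵀ.mulVec w)

lemma inner_momentDensity (q d f : E3) (M : Matrix (Fin m) (Fin 3) ℝ) (w : Fin m → ℝ) :
    ⟪q, momentDensity d f M w⟫ = (∑ i, f i * cross q d i) + ∑ α, w α * toEv (M.mulVec q) α := by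
  rw [momentDensity, inner_add_right, EuclideanSpace.inner_eq_star_dotProduct,
    EuclideanSpace.inner_eq_star_dotProduct, star_trivial]
  change (d ⨯₃ f) ⬝ᵥ q + (Mᵀ *ᵥ w) ⬝ᵥ q = f ⬝ᵥ (q ⨯₃ d) + w ⬝ᵥ M *ᵥ q
  rw [triple_product_permutation, dotProduct_mulVec, mulVec_transpose, dotProduct_comm (d ⨯₃ f)]

lemma momentDensity_sub (d c c' f : E3) (M : Matrix (Fin m) (Fin 3) ℝ) (w : Fin m → ℝ) :
    momentDensity (d - c) f M w = momentDensity (d - c') f M w + cross (c' - c) f := by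
  rw [momentDensity, momentDensity, show d - c = (d - c') + (c' - c) by abel, cross_add_left]
  abel

lemma integral_momentDensity_sub {α : Type*} [MeasurableSpace α] {μ : Measure α}
    {d f : α → E3} {M : α → Matrix (Fin m) (Fin 3) ℝ} {w : α → Fin m → ℝ} (c c' : E3)
    (h : Integrable (fun x => momentDensity (d x - c') (f x) (M x) (w x)) μ)
    (hf : Integrable f μ) :
    ∫ x, momentDensity (d x - c) (f x) (M x) (w x) ∂μ
      = (∫ x, momentDensity (d x - c') (f x) (M x) (w x) ∂μ) + cross (c' - c) (∫ x, f x ∂μ) := by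
  simp_rw [momentDensity_sub _ c c', ← crossCLM_apply]
  rw [integral_add h ((crossCLM (c' - c)).integrable_comp hf),
    (crossCLM (c' - c)).integral_comp_comm hf]

@[fun_prop]
lemma Continuous.momentDensity {α : Type*} [TopologicalSpace α] {d f : α → E3}
    {M : α → Matrix (Fin m) (Fin 3) ℝ} {w : α → Fin m → ℝ} (hd : Continuous d)
    (hf : Continuous f) (hM : Continuous M) (hw : Continuous w) :
    Continuous fun x => momentDensity (d x) (f x) (M x) (w x) := by
  unfold _root_.momentDensity
  fun_prop

end MomentDensity

instance {ι κ R : Type*} [Finite ι] [Finite κ] [TopologicalSpace R]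
    [TopologicalSpace.PseudoMetrizableSpace R] :
    TopologicalSpace.PseudoMetrizableSpace (Matrix ι κ R) :=
  inferInstanceAs (TopologicalSpace.PseudoMetrizableSpace (ι → κ → R))

instance {ι κ R : Type*} [Countable ι] [Countable κ] [TopologicalSpace R]
    [SecondCountableTopology R] : SecondCountableTopology (Matrix ι κ R) :=
  inferInstanceAs (SecondCountableTopology (ι → κ → R))

open Set in
lemma integrableOn_comp_of_continuousOn_of_mapsTo {α G H F : Type*} [TopologicalSpace α]
    [MeasurableSpace α] [OpensMeasurableSpace α] [TopologicalSpace G]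
    [TopologicalSpace.PseudoMetrizableSpace G] [SecondCountableTopology G] [TopologicalSpace H]
    [NormedAddCommGroup F] {μ : Measure α} {K : Set α} {L : Set H} (hK : IsCompact K)
    (hKm : MeasurableSet K) (hμK : μ K < ⊤) {Φ : G × H → F} (hΦ : Continuous Φ) {g : α → G}
    (hg : ContinuousOn g K) {n : α → H} (hn : AEStronglyMeasurable n (μ.restrict K))
    (hL : IsCompact L) (hnL : MapsTo n K L) :
    IntegrableOn (fun x => Φ (g x, n x)) K μ := by
  obtain ⟨C, hC⟩ := ((hK.image_of_continuousOn hg).prod hL).exists_bound_of_continuousOn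
    hΦ.continuousOn
  refine .of_bound hμK (hΦ.comp_aestronglyMeasurable ((hg.aestronglyMeasurable hKm).prodMk hn))
    C ?_
  filter_upwards [ae_restrict_mem hKm] with x hx
  exact hC _ ⟨mem_image_of_mem g hx, hnL hx⟩

lemma sum_fderiv_add_const_single (c x : E3) :
    ∑ j, fderiv ℝ (fun x' : E3 => x' + c) x (EuclideanSpace.single j 1) j = 3 := by
  simp [fderiv_add_const]

namespace BodyPart

variable {B : Set E3} (𝔟 : BodyPart B)

lemma isCompact_closure : IsCompact (closure 𝔟.carrier) := 𝔟.isBounded.isCompact_closure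

lemma isCompact_frontier : IsCompact (frontier 𝔟.carrier) :=
  𝔟.isCompact_closure.of_isClosed_subset isClosed_frontier frontier_subset_closure

lemma integrableOn_of_continuousOn {F : Type*} [NormedAddCommGroup F] {f : E3 → F}
    (hf : ContinuousOn f B) : IntegrableOn f 𝔟.carrier :=
  ((hf.mono 𝔟.closure_subset).integrableOn_compact 𝔟.isCompact_closure).mono_set subset_closure

/-- For a nonempty part, Gauss–Green for `x ↦ x + c` equates `∫ ⟪x + c, n⟫` with `3 |𝔟| ≠ 0`,
which the junk value `0` of a non-integrable integral cannot be. -/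
lemma integrableOn_inner_add_normal (c : E3) :
    IntegrableOn (fun x => ⟪x + c, 𝔟.n x⟫) (frontier 𝔟.carrier) μH[2] := by
  rcases 𝔟.carrier.eq_empty_or_nonempty with hempty | hne
  · simp [hempty]
  by_contra hint
  have h := 𝔟.gauss_green (fun x => x + c) (contDiff_id.add contDiff_const)
  simp only [sum_fderiv_add_const_single, setIntegral_const, integral_undef hint, smul_eq_mul,
    mul_eq_zero, OfNat.ofNat_ne_zero, or_false] at h
  have hpos : 0 < volume.real 𝔟.carrier :=
    ENNReal.toReal_pos (𝔟.isOpen.measure_pos volume hne).ne'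
      ((measure_mono subset_closure).trans_lt 𝔟.isCompact_closure.measure_lt_top).ne
  exact hpos.ne' h

lemma integrableOn_normal : IntegrableOn 𝔟.n (frontier 𝔟.carrier) μH[2] := by
  refine Integrable.of_eval_piLp fun i => ?_
  refine ((𝔟.integrableOn_inner_add_normal (EuclideanSpace.single i 1)).sub
    (𝔟.integrableOn_inner_add_normal 0)).congr (ae_of_all _ fun x => ?_)
  simp [inner_add_left, EuclideanSpace.inner_single_left]

lemma integrableOn_frontier {G F : Type*} [TopologicalSpace G]
    [TopologicalSpace.PseudoMetrizableSpace G] [SecondCountableTopology G] [NormedAddCommGroup F]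
    {Φ : G × E3 → F} (hΦ : Continuous Φ) {g : E3 → G} (hg : ContinuousOn g B) :
    IntegrableOn (fun x => Φ (g x, 𝔟.n x)) (frontier 𝔟.carrier) μH[2] :=
  integrableOn_comp_of_continuousOn_of_mapsTo 𝔟.isCompact_frontier
    isClosed_frontier.measurableSet 𝔟.finite_boundary.lt_top hΦ
    (hg.mono (frontier_subset_closure.trans 𝔟.closure_subset))
    𝔟.integrableOn_normal.aestronglyMeasurable (isCompact_sphere 0 1)
    fun x hx => mem_sphere_zero_iff_norm.2 (𝔟.unit_normal x hx)

end BodyPart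

section Resultants

variable {B : Set E3} {m : ℕ} (b y : E3 → E3) (β : E3 → Ev m)
  (P : E3 → Matrix (Fin 3) (Fin 3) ℝ) (S A : E3 → Matrix (Fin m) (Fin 3) ℝ) (𝔟 : BodyPart B)

def resultantForce : E3 :=
  (∫ x in 𝔟.carrier, b x) + ∫ x in frontier 𝔟.carrier, toE3 ((P x).mulVec (𝔟.n x)) ∂μH[2]

def resultantMoment (y₀ : E3) : E3 :=
  (∫ x in 𝔟.carrier, momentDensity (y x - y₀) (b x) (A x) (β x))
  + ∫ x in frontier 𝔟.carrier,
      momentDensity (y x - y₀) (toE3 ((P x).mulVec (𝔟.n x))) (A x) ((S x).mulVec (𝔟.n x)) ∂μH[2]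

variable {b y β P S A 𝔟}

lemma extPower_rotation_eq_inner_resultantMoment {y₀ : E3}
    (hbulk : IntegrableOn (fun x => momentDensity (y x - y₀) (b x) (A x) (β x)) 𝔟.carrier)
    (hcontact : IntegrableOn (fun x =>
      momentDensity (y x - y₀) (toE3 ((P x).mulVec (𝔟.n x))) (A x) ((S x).mulVec (𝔟.n x)))
      (frontier 𝔟.carrier) μH[2]) (q : E3) :
    extPower b β P S 𝔟 (fun x => cross q (y x - y₀)) (fun x => toEv ((A x).mulVec q))
      = ⟪q, resultantMoment b y β P S A 𝔟 y₀⟫ := by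
  rw [resultantMoment, inner_add_right, ← integral_inner hbulk, ← integral_inner hcontact]
  simp only [inner_momentDensity]
  rfl

lemma resultantMoment_eq_add_cross {c c' : E3} (hb : IntegrableOn b 𝔟.carrier)
    (hPn : IntegrableOn (fun x => toE3 ((P x).mulVec (𝔟.n x))) (frontier 𝔟.carrier) μH[2])
    (hbulk : IntegrableOn (fun x => momentDensity (y x - c') (b x) (A x) (β x)) 𝔟.carrier)
    (hcontact : IntegrableOn (fun x =>
      momentDensity (y x - c') (toE3 ((P x).mulVec (𝔟.n x))) (A x) ((S x).mulVec (𝔟.n x)))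
      (frontier 𝔟.carrier) μH[2]) :
    resultantMoment b y β P S A 𝔟 c
      = resultantMoment b y β P S A 𝔟 c' + cross (c' - c) (resultantForce b P 𝔟) := by
  rw [resultantMoment, resultantMoment, resultantForce, integral_momentDensity_sub c c' hbulk hb,
    integral_momentDensity_sub c c' hcontact hPn, cross_add_right]
  abel

end Resultants

theorem integral_balances_of_SO3_invariance_general
    {m : ℕ} (B : Set E3)
    (b y : E3 → E3) (β : E3 → Ev m)
    (P : E3 → Matrix (Fin 3) (Fin 3) ℝ)
    (S A : E3 → Matrix (Fin m) (Fin 3) ℝ)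
    -- all fields are continuous on B
    (hbc : ContinuousOn b B) (hyc : ContinuousOn y B) (hβc : ContinuousOn β B)
    (hPc : ContinuousOn P B) (hSc : ContinuousOn S B) (hAc : ContinuousOn A B)
    -- SO(3) invariance of the external power
    (hrot : ∀ (𝔟 : BodyPart B) (q y₀ : E3),
      extPower b β P S 𝔟
        (fun x => cross q (y x - y₀))
        (fun x => toEv ((A x).mulVec q)) = 0) :
    ∀ (𝔟 : BodyPart B) (y₀ : E3),
      -- integral balance of forces
      ((∫ x in 𝔟.carrier, b x)
        + (∫ x in frontier 𝔟.carrier, toE3 ((P x).mulVec (𝔟.n x)) ∂μH[2]) = 0)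
      ∧
      -- integral balance of moments
      ((∫ x in 𝔟.carrier,
          (cross (y x - y₀) (b x) + toE3 ((A x)ᵀ.mulVec (β x))))
        + (∫ x in frontier 𝔟.carrier,
            (cross (y x - y₀) (toE3 ((P x).mulVec (𝔟.n x)))
              + toE3 ((A x)ᵀ.mulVec ((S x).mulVec (𝔟.n x)))) ∂μH[2]) = 0) := by
  intro 𝔟 y₀
  have hbulk (c : E3) :
      IntegrableOn (fun x => momentDensity (y x - c) (b x) (A x) (β x)) 𝔟.carrier :=
    𝔟.integrableOn_of_continuousOn (by fun_prop)
  have hcontact (c : E3) : IntegrableOn (fun x =>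
      momentDensity (y x - c) (toE3 ((P x).mulVec (𝔟.n x))) (A x) ((S x).mulVec (𝔟.n x)))
      (frontier 𝔟.carrier) μH[2] :=
    (𝔟.integrableOn_frontier (g := fun x => (y x, P x, S x, A x))
      (Φ := fun p =>
        momentDensity (p.1.1 - c) (toE3 (p.1.2.1 *ᵥ p.2)) p.1.2.2.2 (p.1.2.2.1 *ᵥ p.2))
      (by fun_prop) (by fun_prop) :)
  have hmoment (c : E3) : resultantMoment b y β P S A 𝔟 c = 0 :=
    ext_inner_left ℝ fun q => by
      rw [← extPower_rotation_eq_inner_resultantMoment (hbulk c) (hcontact c), hrot,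
        inner_zero_right]
  refine ⟨eq_zero_of_forall_cross_eq_zero fun c => ?_, hmoment y₀⟩
  have hshift := resultantMoment_eq_add_cross (c := 0) (c' := c)
    (𝔟.integrableOn_of_continuousOn hbc)
    (𝔟.integrableOn_frontier (g := P) (Φ := fun p => toE3 (p.1 *ᵥ p.2)) (by fun_prop) hPc)
    (hbulk c) (hcontact c)
  rwa [hmoment, hmoment, zero_add, sub_zero, eq_comm] at hshift

/-- Theorem 1, part (i), embedded form. If the external power of all
actions on any part is invariant under rotational semi-classical changes in observers
(i.e. it vanishes on every rotational rigid rate pair, for every part, rotational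
velocity `q` and centre `y₀`), then on every part and about every centre both the
integral balance of forces and the integral balance of moments hold. -/
theorem integral_balances_of_SO3_invariance
    {m : ℕ} (B : Set E3) (hB : IsOpen B)
    (b y : E3 → E3) (β : E3 → Ev m)
    (P : E3 → Matrix (Fin 3) (Fin 3) ℝ)
    (S A : E3 → Matrix (Fin m) (Fin 3) ℝ)
    -- all fields are continuous on B
    (hbc : ContinuousOn b B) (hyc : ContinuousOn y B) (hβc : ContinuousOn β B)
    (hPc : ContinuousOn P B) (hSc : ContinuousOn S B) (hAc : ContinuousOn A B)
    -- SO(3) invariance of the external power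
    (hrot : ∀ (𝔟 : BodyPart B) (q y₀ : E3),
      extPower b β P S 𝔟
        (fun x => cross q (y x - y₀))
        (fun x => toEv ((A x).mulVec q)) = 0) :
    ∀ (𝔟 : BodyPart B) (y₀ : E3),
      -- integral balance of forces
      ((∫ x in 𝔟.carrier, b x)
        + (∫ x in frontier 𝔟.carrier, toE3 ((P x).mulVec (𝔟.n x)) ∂μH[2]) = 0)
      ∧
      -- integral balance of moments
      ((∫ x in 𝔟.carrier,
          (cross (y x - y₀) (b x) + toE3 ((A x)ᵀ.mulVec (β x))))
        + (∫ x in frontier 𝔟.carrier,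
            (cross (y x - y₀) (toE3 ((P x).mulVec (𝔟.n x)))
              + toE3 ((A x)ᵀ.mulVec ((S x).mulVec (𝔟.n x)))) ∂μH[2]) = 0) :=
  integral_balances_of_SO3_invariance_general B b y β P S A hbc hyc hβc hPc hSc hAc hrot
end
end

section
/- Rotational invariance implies full isometric invariance of the external power: suppose that for every part 𝔟, every q ∈ ℝ³ and every centre y₀ ∈ ℝ³ one has P^ext_𝔟(q × (y − y₀), Aq) = 0. Then also P^ext_𝔟(c, 0) = 0 for every constant translational velocity c ∈ ℝ³ and every part 𝔟; consequently P^ext_𝔟(c + q × (y − y₀), Aq) = 0 for all c, q, y₀, i.e. the external power is invariant under all isometric semi-classical changes in observers (the semi-direct product ℝ³ ⋉ SO(3)). -/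
open MeasureTheory RealInnerProductSpace Matrix

noncomputable section

/-!
Subtracting the rotational rate pairs about the centres `0` and `d` leaves the constant pair
`(q × d, 0)`, so rotational invariance kills every constant velocity of the form `q × d`; since
every `c ∈ ℝ³` is a sum of three such cross products, it kills all translations, and adding back
a rotational pair gives full isometric invariance.

The subtraction needs additivity of the external power, hence integrability of the integrands.
The fields are continuous on the compact closure of the part, and the only delicate point is the
measurability of the normal field on the boundary, which is extracted from the Gauss–Green
identity built into `BodyPart`.
-/

namespace BodyPart

variable {B : Set E3} (𝔟 : BodyPart B)

lemma frontier_subset : frontier 𝔟.carrier ⊆ B :=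
  frontier_subset_closure.trans 𝔟.closure_subset

lemma integrableOn_of_continuousOn_s7 {g : E3 → ℝ} (hg : ContinuousOn g B) :
    IntegrableOn g 𝔟.carrier :=
  ((hg.mono 𝔟.closure_subset).integrableOn_compact 𝔟.isBounded.isCompact_closure).mono_set
    subset_closure

/-- Gauss–Green for `x ↦ (xᵢ - a) eᵢ`, whose divergence is `1`, equates the boundary integral
with the positive volume of the part; a non-integrable integrand would integrate to `0`. -/
lemma integrable_coord_sub_mul_normal (hne : 𝔟.carrier.Nonempty) (i : Fin 3) (a : ℝ) :
    Integrable (fun x => (x i - a) * 𝔟.n x i) (μH[2].restrict (frontier 𝔟.carrier)) := by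
  set f : E3 → E3 := fun x => (x i - a) • EuclideanSpace.single i (1 : ℝ)
  have hcoord : ContDiff ℝ 1 (fun x : E3 => x i - a) :=
    (EuclideanSpace.proj (𝕜 := ℝ) i).contDiff.sub contDiff_const
  have hdiv : ∀ x, ∑ j, fderiv ℝ f x (EuclideanSpace.single j 1) j = 1 := by
    intro x
    have hgrad : fderiv ℝ (fun x : E3 => x i - a) x = EuclideanSpace.proj (𝕜 := ℝ) i := by
      rw [fderiv_sub_const]
      exact (EuclideanSpace.proj (𝕜 := ℝ) i).fderiv
    rw [fderiv_smul_const (hcoord.differentiable one_ne_zero x), hgrad,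
      Finset.sum_eq_single i (fun j _ hj => by simp [hj]) (by simp)]
    simp
  have hinner : ∀ x, ⟪f x, 𝔟.n x⟫ = (x i - a) * 𝔟.n x i := by
    intro x
    simp only [f, PiLp.inner_apply, PiLp.smul_apply, PiLp.single_apply, smul_eq_mul, mul_ite,
      mul_one, mul_zero, RCLike.inner_apply, Real.ringHom_apply, Finset.sum_ite_eq',
      Finset.mem_univ, if_true]
    ring
  have hgg := 𝔟.gauss_green f (hcoord.smul contDiff_const)
  simp only [hdiv, hinner, integral_const, smul_eq_mul, mul_one,
    measureReal_restrict_apply_univ] at hgg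
  refine Integrable.of_integral_ne_zero (hgg ▸ ?_)
  exact (ENNReal.toReal_pos (𝔟.isOpen.measure_pos volume hne).ne'
    𝔟.isBounded.measure_lt_top.ne).ne'

lemma aestronglyMeasurable_normal (i : Fin 3) :
    AEStronglyMeasurable (fun x => 𝔟.n x i) (μH[2].restrict (frontier 𝔟.carrier)) := by
  rcases 𝔟.carrier.eq_empty_or_nonempty with h | hne
  · rw [h, frontier_empty, Measure.restrict_empty]
    exact aestronglyMeasurable_zero_measure _
  · refine (((𝔟.integrable_coord_sub_mul_normal hne i 0).sub
      (𝔟.integrable_coord_sub_mul_normal hne i 1)).congr ?_).aestronglyMeasurable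
    exact Filter.Eventually.of_forall fun x => by simp only [Pi.sub_apply]; ring

lemma integrable_mul_normal {c : E3 → ℝ} (hc : ContinuousOn c B) (j : Fin 3) :
    Integrable (fun x => c x * 𝔟.n x j) (μH[2].restrict (frontier 𝔟.carrier)) := by
  have hmeas : MeasurableSet (frontier 𝔟.carrier) := isClosed_frontier.measurableSet
  have hcf : ContinuousOn c (frontier 𝔟.carrier) := hc.mono 𝔟.frontier_subset
  obtain ⟨M, hM⟩ := 𝔟.isCompact_frontier.exists_bound_of_continuousOn hcf
  refine ⟨(hcf.aestronglyMeasurable hmeas).mul (𝔟.aestronglyMeasurable_normal j), ?_⟩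
  refine HasFiniteIntegral.restrict_of_bounded M 𝔟.finite_boundary.lt_top ?_
  filter_upwards [ae_restrict_mem hmeas] with x hx
  have hn : ‖𝔟.n x j‖ ≤ 1 := (𝔟.unit_normal x hx) ▸ PiLp.norm_apply_le (𝔟.n x) j
  calc ‖c x * 𝔟.n x j‖ = ‖c x‖ * ‖𝔟.n x j‖ := norm_mul _ _
    _ ≤ M * 1 := mul_le_mul (hM x hx) hn (norm_nonneg _) ((norm_nonneg _).trans (hM x hx))
    _ = M := mul_one M

lemma integrable_mulVec_normal_mul {k : ℕ} {M : E3 → Matrix (Fin k) (Fin 3) ℝ}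
    {u : E3 → EuclideanSpace ℝ (Fin k)} (hM : ContinuousOn M B) (hu : ContinuousOn u B) :
    Integrable (fun x => ∑ i, (M x).mulVec (𝔟.n x) i * u x i)
      (μH[2].restrict (frontier 𝔟.carrier)) := by
  have hswap : (fun x => ∑ i, (M x).mulVec (𝔟.n x) i * u x i)
      = fun x => ∑ j, (∑ i, M x i j * u x i) * 𝔟.n x j := by
    funext x
    simp only [Matrix.mulVec, dotProduct, Finset.sum_mul]
    rw [Finset.sum_comm]
    exact Finset.sum_congr rfl fun i _ => Finset.sum_congr rfl fun j _ => by ring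
  rw [hswap]
  exact integrable_finsetSum _ fun j _ => 𝔟.integrable_mul_normal (by fun_prop) j

end BodyPart

@[fun_prop]
lemma continuous_cross (q : E3) : Continuous (cross q) :=
  (PiLp.continuous_toLp 2 _).comp (by fun_prop)

@[fun_prop]
lemma continuous_toEv {m : ℕ} : Continuous (toEv (m := m)) :=
  PiLp.continuous_toLp 2 _

lemma cross_add (q u v : E3) : cross q (u + v) = cross q u + cross q v := by
  ext i
  fin_cases i <;> simp [cross, toE3] <;> ring

open EuclideanSpace in
lemma cross_single_add_cross_single_add_cross_single (c : E3) :
    cross (single 1 1) (single 2 (c 0)) + cross (single 2 1) (single 0 (c 1))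
      + cross (single 0 1) (single 1 (c 2)) = c := by
  ext i
  fin_cases i <;> simp [cross, toE3]

section ExternalPower

variable {B : Set E3} {m : ℕ} {b y : E3 → E3} {β : E3 → Ev m}
  {P : E3 → Matrix (Fin 3) (Fin 3) ℝ} {S A : E3 → Matrix (Fin m) (Fin 3) ℝ}

lemma extPower_eq_add (hbc : ContinuousOn b B) (hβc : ContinuousOn β B)
    (hPc : ContinuousOn P B) (hSc : ContinuousOn S B) (𝔟 : BodyPart B)
    {v v₁ v₂ : E3 → E3} {w w₁ w₂ : E3 → Ev m}
    (hv₁ : ContinuousOn v₁ B) (hv₂ : ContinuousOn v₂ B)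
    (hw₁ : ContinuousOn w₁ B) (hw₂ : ContinuousOn w₂ B)
    (hv : ∀ x, v x = v₁ x + v₂ x) (hw : ∀ x, w x = w₁ x + w₂ x) :
    extPower b β P S 𝔟 v w = extPower b β P S 𝔟 v₁ w₁ + extPower b β P S 𝔟 v₂ w₂ := by
  have hbulk : ∀ {v' : E3 → E3} {w' : E3 → Ev m}, ContinuousOn v' B → ContinuousOn w' B →
      IntegrableOn (fun x => (∑ i, b x i * v' x i) + ∑ α, β x α * w' x α) 𝔟.carrier :=
    fun hv' hw' => 𝔟.integrableOn_of_continuousOn_s7 (by fun_prop)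
  have hsurf : ∀ {v' : E3 → E3} {w' : E3 → Ev m}, ContinuousOn v' B → ContinuousOn w' B →
      Integrable (fun x => (∑ i, (P x).mulVec (𝔟.n x) i * v' x i)
        + ∑ α, (S x).mulVec (𝔟.n x) α * w' x α) (μH[2].restrict (frontier 𝔟.carrier)) :=
    fun hv' hw' => (𝔟.integrable_mulVec_normal_mul hPc hv').add
      (𝔟.integrable_mulVec_normal_mul hSc hw')
  rw [extPower, extPower, extPower, add_add_add_comm,
    ← integral_add (hbulk hv₁ hw₁) (hbulk hv₂ hw₂),
    ← integral_add (hsurf hv₁ hw₁) (hsurf hv₂ hw₂)]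
  congr 1 <;> refine integral_congr_ae (ae_of_all _ fun x => ?_) <;>
    simp only [hv, hw, PiLp.add_apply, mul_add, Finset.sum_add_distrib] <;> ring

lemma extPower_const_add (hbc : ContinuousOn b B) (hβc : ContinuousOn β B)
    (hPc : ContinuousOn P B) (hSc : ContinuousOn S B) (𝔟 : BodyPart B) (c₁ c₂ : E3) :
    extPower b β P S 𝔟 (fun _ => c₁ + c₂) (fun _ => 0)
      = extPower b β P S 𝔟 (fun _ => c₁) (fun _ => 0)
        + extPower b β P S 𝔟 (fun _ => c₂) (fun _ => 0) :=
  extPower_eq_add hbc hβc hPc hSc 𝔟 continuousOn_const continuousOn_const continuousOn_const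
    continuousOn_const (fun _ => rfl) (fun _ => (add_zero 0).symm)

lemma extPower_const_cross_eq_zero (hbc : ContinuousOn b B) (hyc : ContinuousOn y B)
    (hβc : ContinuousOn β B) (hPc : ContinuousOn P B) (hSc : ContinuousOn S B)
    (hAc : ContinuousOn A B)
    (hrot : ∀ (𝔟 : BodyPart B) (q y₀ : E3),
      extPower b β P S 𝔟 (fun x => cross q (y x - y₀)) (fun x => toEv ((A x).mulVec q)) = 0)
    (𝔟 : BodyPart B) (q d : E3) :
    extPower b β P S 𝔟 (fun _ => cross q d) (fun _ => 0) = 0 := by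
  have hsplit := extPower_eq_add hbc hβc hPc hSc 𝔟 (v := fun x => cross q (y x - 0))
    (v₂ := fun x => cross q (y x - d)) (w₂ := fun x => toEv ((A x).mulVec q))
    continuousOn_const (by fun_prop) continuousOn_const (by fun_prop)
    (fun x => by rw [← cross_add, add_sub_cancel, sub_zero]) (fun _ => (zero_add _).symm)
  rwa [hrot, hrot, add_zero, eq_comm] at hsplit

lemma extPower_const_eq_zero (hbc : ContinuousOn b B) (hyc : ContinuousOn y B)
    (hβc : ContinuousOn β B) (hPc : ContinuousOn P B) (hSc : ContinuousOn S B)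
    (hAc : ContinuousOn A B)
    (hrot : ∀ (𝔟 : BodyPart B) (q y₀ : E3),
      extPower b β P S 𝔟 (fun x => cross q (y x - y₀)) (fun x => toEv ((A x).mulVec q)) = 0)
    (𝔟 : BodyPart B) (c : E3) :
    extPower b β P S 𝔟 (fun _ => c) (fun _ => 0) = 0 := by
  have hcross := extPower_const_cross_eq_zero hbc hyc hβc hPc hSc hAc hrot 𝔟
  rw [← cross_single_add_cross_single_add_cross_single c, extPower_const_add hbc hβc hPc hSc,
    extPower_const_add hbc hβc hPc hSc, hcross, hcross, hcross, add_zero, add_zero]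

end ExternalPower

theorem isometric_invariance_of_rotational_invariance_general
    {m : ℕ} (B : Set E3)
    (b y : E3 → E3) (β : E3 → Ev m)
    (P : E3 → Matrix (Fin 3) (Fin 3) ℝ)
    (S A : E3 → Matrix (Fin m) (Fin 3) ℝ)
    -- all fields are continuous on B
    (hbc : ContinuousOn b B) (hyc : ContinuousOn y B) (hβc : ContinuousOn β B)
    (hPc : ContinuousOn P B) (hSc : ContinuousOn S B) (hAc : ContinuousOn A B)
    -- rotational invariance of the external power
    (hrot : ∀ (𝔟 : BodyPart B) (q y₀ : E3),
      extPower b β P S 𝔟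
        (fun x => cross q (y x - y₀))
        (fun x => toEv ((A x).mulVec q)) = 0) :
    -- translational invariance
    (∀ (𝔟 : BodyPart B) (c : E3),
      extPower b β P S 𝔟 (fun _ => c) (fun _ => 0) = 0)
    ∧
    -- full isometric invariance
    (∀ (𝔟 : BodyPart B) (c q y₀ : E3),
      extPower b β P S 𝔟
        (fun x => c + cross q (y x - y₀))
        (fun x => toEv ((A x).mulVec q)) = 0) := by
  have htrans := extPower_const_eq_zero hbc hyc hβc hPc hSc hAc hrot
  refine ⟨htrans, fun 𝔟 c q y₀ => ?_⟩
  rw [extPower_eq_add hbc hβc hPc hSc 𝔟 (v₁ := fun _ => c) (w₁ := fun _ => 0) continuousOn_const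
    (by fun_prop) continuousOn_const (by fun_prop) (fun _ => rfl) (fun _ => (zero_add _).symm),
    htrans, hrot, add_zero]

/-- rotational invariance implies full isometric invariance of the
external power. If the external power vanishes on every rotational rigid rate pair,
for every part, rotational velocity and centre, then it also vanishes on every constant
translational rate pair `(c, 0)`, and consequently on every isometric rigid rate pair
`(c + q × (y − y₀), A q)`: the external power is invariant under all isometric
semi-classical changes in observers (the semi-direct product `ℝ³ ⋉ SO(3)`). -/
theorem isometric_invariance_of_rotational_invariance
    {m : ℕ} (B : Set E3) (hB : IsOpen B)
    (b y : E3 → E3) (β : E3 → Ev m)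
    (P : E3 → Matrix (Fin 3) (Fin 3) ℝ)
    (S A : E3 → Matrix (Fin m) (Fin 3) ℝ)
    -- all fields are continuous on B
    (hbc : ContinuousOn b B) (hyc : ContinuousOn y B) (hβc : ContinuousOn β B)
    (hPc : ContinuousOn P B) (hSc : ContinuousOn S B) (hAc : ContinuousOn A B)
    -- rotational invariance of the external power
    (hrot : ∀ (𝔟 : BodyPart B) (q y₀ : E3),
      extPower b β P S 𝔟
        (fun x => cross q (y x - y₀))
        (fun x => toEv ((A x).mulVec q)) = 0) :
    -- translational invariance
    (∀ (𝔟 : BodyPart B) (c : E3),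
      extPower b β P S 𝔟 (fun _ => c) (fun _ => 0) = 0)
    ∧
    -- full isometric invariance
    (∀ (𝔟 : BodyPart B) (c q y₀ : E3),
      extPower b β P S 𝔟
        (fun x => c + cross q (y x - y₀))
        (fun x => toEv ((A x).mulVec q)) = 0) :=
  isometric_invariance_of_rotational_invariance_general B b y β P S A hbc hyc hβc hPc hSc hAc hrot
end
end
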